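/- arXiv:1409.6492 — 3 statements merged into one kernel-verified Lean document; each statement's English description precedes it below -/
import Mathlib

section
/- A set A ∈ B is U-absorbing with respect to m if and only if its complement E \ A is U*-absorbing with respect to m. -/
open MeasureTheory ENNReal Filter Set

/-- A sub-Markovian resolvent of kernels on a measurable space `E`. -/
structure SubMarkovResolvent (E : Type*) [MeasurableSpace E] where
  /-- the kernel `U_α` for each `α > 0` -/
  kernel : ℝ → E → MeasureTheory.Measure E
  measurable_op : ∀ α : ℝ, 0 < α → ∀ f : E → ℝ≥0∞, Measurable f →
    Measurable (fun x => ∫⁻ y, f y ∂(kernel α x))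
  resolvent_eq : ∀ α β : ℝ, 0 < α → α ≤ β → ∀ f : E → ℝ≥0∞, Measurable f → ∀ x,
    ∫⁻ y, f y ∂(kernel α x)
      = (∫⁻ y, f y ∂(kernel β x))
        + ENNReal.ofReal (β - α) * ∫⁻ y, (∫⁻ z, f z ∂(kernel β y)) ∂(kernel α x)
  subMarkov : ∀ α : ℝ, 0 < α → ∀ x, ENNReal.ofReal α * kernel α x Set.univ ≤ 1

namespace SubMarkovResolvent

variable {E : Type*} [MeasurableSpace E]

/-- The action of `U_α` on positive measurable functions. -/
noncomputable def op (R : SubMarkovResolvent E) (α : ℝ) (f : E → ℝ≥0∞) (x : E) : ℝ≥0∞ :=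
  ∫⁻ y, f y ∂(R.kernel α x)

/-- The action of `U_α` on real-valued functions. -/
noncomputable def opR (R : SubMarkovResolvent E) (α : ℝ) (f : E → ℝ) (x : E) : ℝ :=
  ∫ y, f y ∂(R.kernel α x)

/-- The initial (potential) kernel `U = sup_{α > 0} U_α`. -/
noncomputable def pot (R : SubMarkovResolvent E) (f : E → ℝ≥0∞) (x : E) : ℝ≥0∞ :=
  ⨆ (α : ℝ) (_ : 0 < α), R.op α f x

/-- `m` is sub-invariant: `m ∘ (α U_α) ≤ m` for all `α > 0`. -/
def SubInvariant (R : SubMarkovResolvent E) (m : Measure E) : Prop :=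
  ∀ α : ℝ, 0 < α → ∀ f : E → ℝ≥0∞, Measurable f →
    ENNReal.ofReal α * ∫⁻ x, R.op α f x ∂m ≤ ∫⁻ x, f x ∂m

/-- `U` is `m`-transient. -/
def Transient (R : SubMarkovResolvent E) (m : Measure E) : Prop :=
  ∃ f : E → ℝ≥0∞, Measurable f ∧ (∫⁻ x, f x ∂m < ⊤) ∧
    (∀ᵐ x ∂m, 0 < f x) ∧ (∀ᵐ x ∂m, R.pot f x < ⊤)

/-- `U` is `m`-recurrent. -/
def Recurrent (R : SubMarkovResolvent E) (m : Measure E) : Prop :=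
  ∀ f : E → ℝ≥0∞, Measurable f → (∫⁻ x, f x ∂m < ⊤) →
    m {x | 0 < R.pot f x ∧ R.pot f x < ⊤} = 0


section Aux

open MeasureTheory ENNReal Set

variable {E : Type*} [MeasurableSpace E]

lemma op_antitone (R : SubMarkovResolvent E) {α β : ℝ} (hα : 0 < α) (hαβ : α ≤ β)
    {f : E → ℝ≥0∞} (hf : Measurable f) (x : E) : R.op β f x ≤ R.op α f x := by
  have h := R.resolvent_eq α β hα hαβ f hf x
  unfold SubMarkovResolvent.op
  rw [h]
  exact le_self_add

lemma ae_pot_zero_iff (R : SubMarkovResolvent E) (m : Measure E) (A : Set E)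
    {f : E → ℝ≥0∞} (hf : Measurable f) :
    (∀ᵐ x ∂m, x ∈ A → R.pot f x = 0) ↔
      ∀ α : ℝ, 0 < α → ∀ᵐ x ∂m, x ∈ A → R.op α f x = 0 := by
  constructor
  · intro h α hα
    filter_upwards [h] with x hx hxA
    have h0 := hx hxA
    have h1 : R.op α f x ≤ R.pot f x :=
      le_iSup₂ (f := fun (β : ℝ) (_ : 0 < β) => R.op β f x) α hα
    rw [h0] at h1
    exact le_antisymm h1 bot_le
  · intro h
    have h' : ∀ᵐ x ∂m, ∀ n : ℕ, x ∈ A → R.op (1 / (n + 1)) f x = 0 :=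
      ae_all_iff.mpr (fun n => h _ (by positivity))
    filter_upwards [h'] with x hx hxA
    unfold SubMarkovResolvent.pot
    rw [iSup_eq_zero]
    intro α
    rw [iSup_eq_zero]
    intro hα
    obtain ⟨n, hn⟩ := exists_nat_one_div_lt hα
    have h1 : (0:ℝ) < 1 / (n + 1) := by positivity
    have := op_antitone R h1 hn.le hf x
    rw [hx n hxA] at this
    exact le_antisymm this bot_le

lemma ae_op_zero_iff (R : SubMarkovResolvent E) (m : Measure E) {A : Set E}
    (hA : MeasurableSet A) {h : E → ℝ≥0∞} (hh : Measurable h) :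
    (∀ᵐ x ∂m, x ∈ A → h x = 0) ↔ ∫⁻ x, A.indicator 1 x * h x ∂m = 0 := by
  have heq : (fun x => A.indicator 1 x * h x) = A.indicator h := by
    funext x
    by_cases hx : x ∈ A <;> simp [Set.indicator_apply, hx]
  rw [heq, lintegral_eq_zero_iff (hh.indicator hA)]
  constructor
  · intro h'
    filter_upwards [h'] with x hx
    by_cases hxA : x ∈ A
    · simp [Set.indicator_apply, hxA, hx hxA]
    · simp [Set.indicator_apply, hxA]
  · intro h'
    filter_upwards [h'] with x hx hxA
    simpa [Set.indicator_apply, hxA] using hx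

end Aux

/-- `A` is `U`-absorbing with respect to `m`. -/
def Absorbing (R : SubMarkovResolvent E) (m : Measure E) (A : Set E) : Prop :=
  MeasurableSet A ∧ ∀ᵐ x ∂m, x ∈ A → R.pot (Set.indicator Aᶜ 1) x = 0

/-- `U` is `m`-irreducible. -/
def Irreducible (R : SubMarkovResolvent E) (m : Measure E) : Prop :=
  ∀ A : Set E, R.Absorbing m A → m A = 0 ∨ m Aᶜ = 0

/-- `u` is `U`-excessive: supermedian and `α U_α u ↑ u` as `α → ∞`. -/
def Excessive (R : SubMarkovResolvent E) (u : E → ℝ≥0∞) : Prop :=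
  Measurable u ∧ (∀ α : ℝ, 0 < α → ∀ x, ENNReal.ofReal α * R.op α u x ≤ u x) ∧
    (∀ x, (⨆ (α : ℝ) (_ : 0 < α), ENNReal.ofReal α * R.op α u x) = u x)

/-- The complete maximum principle for the initial kernel of `U`. -/
def CompleteMaxPrinciple (R : SubMarkovResolvent E) : Prop :=
  ∀ (f g : E → ℝ≥0∞) (c : ℝ≥0∞), Measurable f → Measurable g →
    (∀ x, 0 < f x → R.pot f x ≤ R.pot g x + c) → ∀ x, R.pot f x ≤ R.pot g x + c

/-- `U` and `U*` are in weak duality with respect to `m`. -/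
def InDuality (R S : SubMarkovResolvent E) (m : Measure E) : Prop :=
  ∀ α : ℝ, 0 < α → ∀ f g : E → ℝ≥0∞, Measurable f → Measurable g →
    ∫⁻ x, f x * R.op α g x ∂m = ∫⁻ x, g x * S.op α f x ∂m

/-- A real-valued function `v` is `U`-invariant with respect to `m`:
`U_α(v f) = v ⋅ U_α f` `m`-a.e. for all `α > 0` and bounded positive measurable `f`. -/
def Invariant (R : SubMarkovResolvent E) (m : Measure E) (v : E → ℝ) : Prop :=
  ∀ α : ℝ, 0 < α → ∀ f : E → ℝ, Measurable f → (∀ x, 0 ≤ f x) → (∃ C : ℝ, ∀ x, f x ≤ C) →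
    ∀ᵐ x ∂m, R.opR α (fun y => v y * f y) x = v x * R.opR α f x

end SubMarkovResolvent


section Aux

open MeasureTheory ENNReal Set

variable {E : Type*} [MeasurableSpace E]

lemma op_antitone (R : SubMarkovResolvent E) {α β : ℝ} (hα : 0 < α) (hαβ : α ≤ β)
    {f : E → ℝ≥0∞} (hf : Measurable f) (x : E) : R.op β f x ≤ R.op α f x := by
  have h := R.resolvent_eq α β hα hαβ f hf x
  unfold SubMarkovResolvent.op
  rw [h]
  exact le_self_add

lemma ae_pot_zero_iff (R : SubMarkovResolvent E) (m : Measure E) (A : Set E)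
    {f : E → ℝ≥0∞} (hf : Measurable f) :
    (∀ᵐ x ∂m, x ∈ A → R.pot f x = 0) ↔
      ∀ α : ℝ, 0 < α → ∀ᵐ x ∂m, x ∈ A → R.op α f x = 0 := by
  constructor
  · intro h α hα
    filter_upwards [h] with x hx hxA
    have h0 := hx hxA
    have h1 : R.op α f x ≤ R.pot f x :=
      le_iSup₂ (f := fun (β : ℝ) (_ : 0 < β) => R.op β f x) α hα
    rw [h0] at h1
    exact le_antisymm h1 bot_le
  · intro h
    have h' : ∀ᵐ x ∂m, ∀ n : ℕ, x ∈ A → R.op (1 / (n + 1)) f x = 0 :=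
      ae_all_iff.mpr (fun n => h _ (by positivity))
    filter_upwards [h'] with x hx hxA
    unfold SubMarkovResolvent.pot
    rw [iSup_eq_zero]
    intro α
    rw [iSup_eq_zero]
    intro hα
    obtain ⟨n, hn⟩ := exists_nat_one_div_lt hα
    have h1 : (0:ℝ) < 1 / (n + 1) := by positivity
    have := op_antitone R h1 hn.le hf x
    rw [hx n hxA] at this
    exact le_antisymm this bot_le

lemma ae_op_zero_iff (R : SubMarkovResolvent E) (m : Measure E) {A : Set E}
    (hA : MeasurableSet A) {h : E → ℝ≥0∞} (hh : Measurable h) :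
    (∀ᵐ x ∂m, x ∈ A → h x = 0) ↔ ∫⁻ x, A.indicator 1 x * h x ∂m = 0 := by
  have heq : (fun x => A.indicator 1 x * h x) = A.indicator h := by
    funext x
    by_cases hx : x ∈ A <;> simp [Set.indicator_apply, hx]
  rw [heq, lintegral_eq_zero_iff (hh.indicator hA)]
  constructor
  · intro h'
    filter_upwards [h'] with x hx
    by_cases hxA : x ∈ A
    · simp [Set.indicator_apply, hxA, hx hxA]
    · simp [Set.indicator_apply, hxA]
  · intro h'
    filter_upwards [h'] with x hx hxA
    simpa [Set.indicator_apply, hxA] using hx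

end Aux

/-- `A` is `U`-absorbing with respect to `m` iff `E \ A` is `U*`-absorbing. -/
theorem absorbing_iff_compl_dual_absorbing {E : Type*} [MeasurableSpace E]
    (R S : SubMarkovResolvent E) (m : MeasureTheory.Measure E) [MeasureTheory.SigmaFinite m]
    (hm : R.SubInvariant m) (hD : R.InDuality S m) (A : Set E) :
    R.Absorbing m A ↔ S.Absorbing m Aᶜ:= by
  have mA_iff : MeasurableSet A ↔ MeasurableSet Aᶜ := ⟨MeasurableSet.compl, fun h => by simpa using h.compl⟩
  have key : ∀ (hA : MeasurableSet A),
      ((∀ᵐ x ∂m, x ∈ A → R.pot (Set.indicator Aᶜ 1) x = 0) ↔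
        (∀ᵐ x ∂m, x ∈ Aᶜ → S.pot (Set.indicator Aᶜᶜ 1) x = 0)) := by
    intro hA
    have hfA : Measurable (A.indicator (1 : E → ℝ≥0∞)) := measurable_one.indicator hA
    have hfAc : Measurable (Aᶜ.indicator (1 : E → ℝ≥0∞)) := measurable_one.indicator hA.compl
    rw [compl_compl, ae_pot_zero_iff R m A hfAc, ae_pot_zero_iff S m Aᶜ hfA]
    apply forall_congr'
    intro α
    apply forall_congr'
    intro hα
    rw [ae_op_zero_iff R m hA (show Measurable (R.op α (Aᶜ.indicator 1)) from
          R.measurable_op α hα _ hfAc),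
        ae_op_zero_iff S m hA.compl (show Measurable (S.op α (A.indicator 1)) from
          S.measurable_op α hα _ hfA),
        hD α hα (A.indicator 1) (Aᶜ.indicator 1) hfA hfAc]
  constructor
  · rintro ⟨hA, h⟩
    exact ⟨hA.compl, (key hA).mp h⟩
  · rintro ⟨hAc, h⟩
    have hA : MeasurableSet A := mA_iff.mpr hAc
    exact ⟨hA, (key hA).mpr h⟩
end

section
/- If U is m-irreducible, then U is either m-transient or m-recurrent. -/
open MeasureTheory ENNReal Filter Set

/-!
The potential `Uf` of a positive `f` is supermedian, `α U_α Uf ≤ Uf`; this needs the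
commutation `U_α U_β = U_β U_α`, obtained from the Neumann expansion
`U_α = ∑ (β - α)ⁿ U_βⁿ⁺¹` of the resolvent equation. Consequently `{Uf < ∞}` and `{Uf = 0}`
are absorbing, so by irreducibility an integrable `f` violating recurrence has
`0 < Uf < ∞` `m`-a.e. Then `f + ∑ 2⁻ⁿ αₙ U_{αₙ} f` with `αₙ = 1/(n+1)` is integrable by
sub-invariance, positive wherever `Uf` is, and has potential at most `3 Uf`: `U` is transient.
-/

open Topology

lemma add_tsum_inv_two_pow_mul_le {a c : ℝ≥0∞} {b : ℕ → ℝ≥0∞} (ha : a ≤ c) (hb : ∀ n, b n ≤ c) :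
    a + ∑' n : ℕ, 2⁻¹ ^ n * b n ≤ 3 * c :=
  calc a + ∑' n : ℕ, 2⁻¹ ^ n * b n ≤ c + ∑' n : ℕ, 2⁻¹ ^ n * c := by gcongr with n; exact hb n
    _ = 3 * c := by rw [ENNReal.tsum_mul_right, ENNReal.tsum_geometric_two]; ring

namespace SubMarkovResolvent

variable {E : Type*} [MeasurableSpace E] (R : SubMarkovResolvent E)

lemma op_measurable {α : ℝ} (hα : 0 < α) {f : E → ℝ≥0∞} (hf : Measurable f) :
    Measurable (R.op α f) :=
  R.measurable_op α hα f hf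

lemma op_mono {f g : E → ℝ≥0∞} (h : f ≤ g) (α : ℝ) (x : E) : R.op α f x ≤ R.op α g x :=
  lintegral_mono h

lemma op_iSup {g : ℕ → E → ℝ≥0∞} (hg : ∀ k, Measurable (g k)) (hmono : Monotone g) (α : ℝ)
    (x : E) : R.op α (fun y => ⨆ k, g k y) x = ⨆ k, R.op α (g k) x :=
  lintegral_iSup hg hmono

lemma op_eq_op_add {α β : ℝ} (hα : 0 < α) (hαβ : α ≤ β) {f : E → ℝ≥0∞} (hf : Measurable f)
    (x : E) : R.op α f x = R.op β f x + ENNReal.ofReal (β - α) * R.op α (R.op β f) x :=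
  R.resolvent_eq α β hα hαβ f hf x

lemma op_anti {α β : ℝ} (hα : 0 < α) (hαβ : α ≤ β) {f : E → ℝ≥0∞} (hf : Measurable f)
    (x : E) : R.op β f x ≤ R.op α f x :=
  (R.op_eq_op_add hα hαβ hf x).symm ▸ le_self_add

lemma op_le_of_le_const {α : ℝ} (hα : 0 < α) {f : E → ℝ≥0∞} {c : ℝ≥0∞} (hfc : ∀ y, f y ≤ c)
    (x : E) : R.op α f x ≤ c * (ENNReal.ofReal α)⁻¹ :=
  calc R.op α f x ≤ ∫⁻ _, c ∂(R.kernel α x) := lintegral_mono hfc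
    _ = c * R.kernel α x univ := lintegral_const c
    _ ≤ c * (ENNReal.ofReal α)⁻¹ := by
      gcongr
      rw [ENNReal.le_inv_iff_mul_le, mul_comm]
      exact R.subMarkov α hα x

lemma measurable_iterate_op {β : ℝ} (hβ : 0 < β) {f : E → ℝ≥0∞} (hf : Measurable f) (n : ℕ) :
    Measurable ((R.op β)^[n] f) := by
  induction n with
  | zero => exact hf
  | succ n ih => rw [Function.iterate_succ_apply']; exact R.op_measurable hβ ih

lemma iterate_op_le_of_le_const {β : ℝ} (hβ : 0 < β) {f : E → ℝ≥0∞} {c : ℝ≥0∞}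
    (hfc : ∀ y, f y ≤ c) (n : ℕ) (y : E) :
    (R.op β)^[n] f y ≤ c * (ENNReal.ofReal β)⁻¹ ^ n := by
  induction n generalizing y with
  | zero => simpa using hfc y
  | succ n ih =>
    rw [Function.iterate_succ_apply', pow_succ, ← mul_assoc]
    exact R.op_le_of_le_const hβ ih y

lemma op_eq_sum_add {α β : ℝ} (hα : 0 < α) (hαβ : α ≤ β) {f : E → ℝ≥0∞} (hf : Measurable f)
    (N : ℕ) (x : E) :
    R.op α f x = ∑ n ∈ Finset.range N, ENNReal.ofReal (β - α) ^ n * (R.op β)^[n + 1] f x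
      + ENNReal.ofReal (β - α) ^ N * R.op α ((R.op β)^[N] f) x := by
  induction N with
  | zero => simp
  | succ N ih =>
    rw [ih, Finset.sum_range_succ,
      R.op_eq_op_add hα hαβ (R.measurable_iterate_op (hα.trans_le hαβ) hf N) x,
      ← Function.iterate_succ_apply' (R.op β)]
    ring

lemma op_eq_tsum_of_le_const {α β : ℝ} (hα : 0 < α) (hαβ : α ≤ β) {f : E → ℝ≥0∞}
    (hf : Measurable f) {c : ℝ≥0∞} (hfc : ∀ y, f y ≤ c) (hc : c ≠ ⊤) (x : E) :
    R.op α f x = ∑' n, ENNReal.ofReal (β - α) ^ n * (R.op β)^[n + 1] f x := by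
  have hβ : 0 < β := hα.trans_le hαβ
  refine le_antisymm ?_ ?_
  · set r := ENNReal.ofReal (β - α) * (ENNReal.ofReal β)⁻¹ with hr_def
    set K := c * (ENNReal.ofReal α)⁻¹
    have hr : r < 1 := by
      rw [hr_def, ← ENNReal.ofReal_inv_of_pos hβ, ← ENNReal.ofReal_mul (by linarith),
        ENNReal.ofReal_lt_one, ← div_eq_mul_inv, div_lt_one hβ]
      linarith
    have hK : K ≠ ⊤ := ENNReal.mul_ne_top hc (by simpa using hα)
    have hrem : ∀ N, ENNReal.ofReal (β - α) ^ N * R.op α ((R.op β)^[N] f) x ≤ r ^ N * K := by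
      intro N
      calc ENNReal.ofReal (β - α) ^ N * R.op α ((R.op β)^[N] f) x
          ≤ ENNReal.ofReal (β - α) ^ N * (c * (ENNReal.ofReal β)⁻¹ ^ N * (ENNReal.ofReal α)⁻¹) :=
            by gcongr; exact R.op_le_of_le_const hα (R.iterate_op_le_of_le_const hβ hfc N) x
        _ = r ^ N * K := by ring
    have hlim : Tendsto (fun N : ℕ => r ^ N * K) atTop (𝓝 0) := by
      simpa using ENNReal.Tendsto.mul_const (ENNReal.tendsto_pow_atTop_nhds_zero_of_lt_one hr)
        (Or.inr hK)
    refine ge_of_tendsto (by simpa using tendsto_const_nhds.add hlim) (Eventually.of_forall ?_)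
    intro N
    rw [R.op_eq_sum_add hα hαβ hf N x]
    exact add_le_add (ENNReal.sum_le_tsum _) (hrem N)
  · rw [ENNReal.tsum_eq_iSup_nat]
    exact iSup_le fun N => (R.op_eq_sum_add hα hαβ hf N x).symm ▸ le_self_add

lemma op_comm_of_le_const {α β : ℝ} (hα : 0 < α) (hαβ : α ≤ β) {f : E → ℝ≥0∞}
    (hf : Measurable f) {c : ℝ≥0∞} (hfc : ∀ y, f y ≤ c) (hc : c ≠ ⊤) (x : E) :
    R.op β (R.op α f) x = R.op α (R.op β f) x := by
  have hβ : 0 < β := hα.trans_le hαβ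
  have hβc : c * (ENNReal.ofReal β)⁻¹ ≠ ⊤ := ENNReal.mul_ne_top hc (by simpa using hβ)
  rw [R.op_eq_tsum_of_le_const hα hαβ (R.op_measurable hβ hf) (R.op_le_of_le_const hβ hfc) hβc x]
  calc R.op β (R.op α f) x
      = ∫⁻ y, ∑' n, ENNReal.ofReal (β - α) ^ n * (R.op β)^[n + 1] f y ∂(R.kernel β x) :=
        lintegral_congr fun y => R.op_eq_tsum_of_le_const hα hαβ hf hfc hc y
    _ = ∑' n, ENNReal.ofReal (β - α) ^ n * R.op β ((R.op β)^[n + 1] f) x := by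
        rw [lintegral_tsum fun n => ((R.measurable_iterate_op hβ hf _).const_mul _).aemeasurable]
        exact tsum_congr fun n => lintegral_const_mul _ (R.measurable_iterate_op hβ hf _)
    _ = ∑' n, ENNReal.ofReal (β - α) ^ n * (R.op β)^[n + 1] (R.op β f) x := by
        simp only [← Function.iterate_succ_apply' (R.op β), Function.iterate_succ_apply]

lemma op_comm_of_le {α β : ℝ} (hα : 0 < α) (hαβ : α ≤ β) {f : E → ℝ≥0∞} (hf : Measurable f)
    (x : E) : R.op β (R.op α f) x = R.op α (R.op β f) x := by
  set g : ℕ → E → ℝ≥0∞ := fun k y => f y ⊓ k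
  have hg : ∀ k, Measurable (g k) := fun k => hf.inf measurable_const
  have hg_mono : Monotone g := fun k l hkl y => inf_le_inf_left _ (Nat.cast_le.2 hkl)
  have hf_eq : f = fun y => ⨆ k, g k y := funext fun y => by
    simp only [g, ← inf_iSup_eq, ENNReal.iSup_natCast, inf_top_eq]
  have op_op_eq : ∀ γ δ, 0 < γ → R.op δ (R.op γ f) x = ⨆ k, R.op δ (R.op γ (g k)) x := by
    intro γ δ hγ
    rw [hf_eq, funext (R.op_iSup hg hg_mono γ)]
    exact R.op_iSup (fun k => R.op_measurable hγ (hg k))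
      (fun k l hkl => R.op_mono (hg_mono hkl) γ) δ x
  rw [op_op_eq α β hα, op_op_eq β α (hα.trans_le hαβ)]
  exact iSup_congr fun k =>
    R.op_comm_of_le_const hα hαβ (hg k) (fun _ => inf_le_right) (ENNReal.natCast_ne_top k) x

lemma op_comm {α β : ℝ} (hα : 0 < α) (hβ : 0 < β) {f : E → ℝ≥0∞} (hf : Measurable f) (x : E) :
    R.op α (R.op β f) x = R.op β (R.op α f) x := by
  rcases le_total α β with h | h
  · exact (R.op_comm_of_le hα h hf x).symm
  · exact R.op_comm_of_le hβ h hf x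

lemma monotone_op_one_div {f : E → ℝ≥0∞} (hf : Measurable f) :
    Monotone fun (n : ℕ) => R.op (1 / (n + 1)) f :=
  fun _ _ h x => R.op_anti Nat.one_div_pos_of_nat (Nat.one_div_le_one_div h) hf x

lemma pot_eq_iSup_nat {f : E → ℝ≥0∞} (hf : Measurable f) (x : E) :
    R.pot f x = ⨆ n : ℕ, R.op (1 / (n + 1)) f x := by
  refine le_antisymm (iSup₂_le fun α hα => ?_)
    (iSup_le fun n => le_iSup₂_of_le (1 / (n + 1 : ℝ)) Nat.one_div_pos_of_nat le_rfl)
  obtain ⟨n, hn⟩ := exists_nat_one_div_lt hα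
  exact le_iSup_of_le n (R.op_anti Nat.one_div_pos_of_nat hn.le hf x)

lemma measurable_pot {f : E → ℝ≥0∞} (hf : Measurable f) : Measurable (R.pot f) := by
  rw [funext (R.pot_eq_iSup_nat hf)]
  exact .iSup fun n => R.op_measurable Nat.one_div_pos_of_nat hf

lemma op_le_pot {α : ℝ} (hα : 0 < α) (f : E → ℝ≥0∞) (x : E) : R.op α f x ≤ R.pot f x :=
  le_iSup₂_of_le α hα le_rfl

lemma op_pot {α : ℝ} (hα : 0 < α) {f : E → ℝ≥0∞} (hf : Measurable f) (x : E) :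
    R.op α (R.pot f) x = R.pot (R.op α f) x := by
  rw [funext (R.pot_eq_iSup_nat hf), R.pot_eq_iSup_nat (R.op_measurable hα hf),
    R.op_iSup (fun n => R.op_measurable Nat.one_div_pos_of_nat hf) (R.monotone_op_one_div hf)]
  exact iSup_congr fun n => R.op_comm hα Nat.one_div_pos_of_nat hf x

lemma mul_pot_op_le {α : ℝ} (hα : 0 < α) {f : E → ℝ≥0∞} (hf : Measurable f) (x : E) :
    ENNReal.ofReal α * R.pot (R.op α f) x ≤ R.pot f x := by
  rw [pot, ENNReal.mul_iSup]
  refine iSup_le fun γ => ?_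
  rw [ENNReal.mul_iSup]
  refine iSup_le fun hγ => ?_
  have hlim : Tendsto (fun ε => ENNReal.ofReal (α - ε) * R.op γ (R.op α f) x) (𝓝[>] 0)
      (𝓝 (ENNReal.ofReal α * R.op γ (R.op α f) x)) := by
    refine ENNReal.Tendsto.mul_const ?_ (Or.inl (ENNReal.ofReal_pos.2 hα).ne')
    refine (ENNReal.continuous_ofReal.tendsto α).comp ?_
    have : Tendsto (fun ε : ℝ => α - ε) (𝓝 0) (𝓝 (α - 0)) := tendsto_const_nhds.sub tendsto_id
    simpa using this.mono_left nhdsWithin_le_nhds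
  refine le_of_tendsto hlim ?_
  filter_upwards [Ioo_mem_nhdsGT (lt_min hγ hα)] with ε ⟨hε, hεγα⟩
  calc ENNReal.ofReal (α - ε) * R.op γ (R.op α f) x
      ≤ ENNReal.ofReal (α - ε) * R.op ε (R.op α f) x :=
        by gcongr; exact R.op_anti hε (hεγα.le.trans (min_le_left _ _)) (R.op_measurable hα hf) x
    _ ≤ R.op ε f x := by
        rw [R.op_eq_op_add hε (hεγα.le.trans (min_le_right _ _)) hf x]
        exact le_add_self
    _ ≤ R.pot f x := R.op_le_pot hε f x

lemma mul_op_pot_le {α : ℝ} (hα : 0 < α) {f : E → ℝ≥0∞} (hf : Measurable f) (x : E) :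
    ENNReal.ofReal α * R.op α (R.pot f) x ≤ R.pot f x :=
  R.op_pot hα hf x ▸ R.mul_pot_op_le hα hf x

lemma absorbing_of_kernel_compl_eq_zero (m : Measure E) {A : Set E} (hA : MeasurableSet A)
    (h : ∀ x ∈ A, ∀ α, 0 < α → R.kernel α x Aᶜ = 0) : R.Absorbing m A := by
  refine ⟨hA, ae_of_all _ fun x hx => nonpos_iff_eq_zero.1 (iSup₂_le fun α hα => ?_)⟩
  exact ((lintegral_indicator_one hA.compl).trans (h x hx α hα)).le

lemma absorbing_pot_lt_top (m : Measure E) {f : E → ℝ≥0∞} (hf : Measurable f) :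
    R.Absorbing m {x | R.pot f x < ⊤} := by
  refine R.absorbing_of_kernel_compl_eq_zero m (measurableSet_lt (R.measurable_pot hf)
    measurable_const) fun x hx α hα => ?_
  have hfin : R.op α (R.pot f) x ≠ ⊤ := fun htop => by
    have := R.mul_op_pot_le hα hf x
    rw [htop, ENNReal.mul_top (ENNReal.ofReal_pos.2 hα).ne', top_le_iff] at this
    exact hx.ne this
  exact ae_iff.1 (ae_lt_top (R.measurable_pot hf) hfin)

lemma absorbing_pot_eq_zero (m : Measure E) {f : E → ℝ≥0∞} (hf : Measurable f) :
    R.Absorbing m {x | R.pot f x = 0} := by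
  refine R.absorbing_of_kernel_compl_eq_zero m (R.measurable_pot hf (measurableSet_singleton 0))
    fun x hx α hα => ?_
  have hzero : R.op α (R.pot f) x = 0 := by
    have := R.mul_op_pot_le hα hf x
    rw [show R.pot f x = 0 from hx, nonpos_iff_eq_zero, mul_eq_zero] at this
    exact this.resolve_left (ENNReal.ofReal_pos.2 hα).ne'
  exact ae_iff.1 ((lintegral_eq_zero_iff (R.measurable_pot hf)).1 hzero)

noncomputable def resolventSeries (f : E → ℝ≥0∞) (y : E) : ℝ≥0∞ :=
  f y + ∑' n : ℕ, 2⁻¹ ^ n * (ENNReal.ofReal (1 / (n + 1)) * R.op (1 / (n + 1)) f y)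

lemma measurable_resolventSeries {f : E → ℝ≥0∞} (hf : Measurable f) :
    Measurable (R.resolventSeries f) :=
  hf.add (.tsum fun _ => ((R.op_measurable Nat.one_div_pos_of_nat hf).const_mul _).const_mul _)

lemma lintegral_resolventSeries {f : E → ℝ≥0∞} (hf : Measurable f) (μ : Measure E) :
    ∫⁻ y, R.resolventSeries f y ∂μ = ∫⁻ y, f y ∂μ + ∑' n : ℕ,
      2⁻¹ ^ n * (ENNReal.ofReal (1 / (n + 1)) * ∫⁻ y, R.op (1 / (n + 1)) f y ∂μ) := by
  have hop (n : ℕ) : Measurable (R.op (1 / (n + 1)) f) :=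
    R.op_measurable Nat.one_div_pos_of_nat hf
  unfold resolventSeries
  rw [lintegral_add_left hf,
    lintegral_tsum fun n => (((hop n).const_mul _).const_mul _).aemeasurable]
  simp only [lintegral_const_mul _ ((hop _).const_mul _), lintegral_const_mul _ (hop _)]

lemma lintegral_resolventSeries_le {m : Measure E} (hm : R.SubInvariant m) {f : E → ℝ≥0∞}
    (hf : Measurable f) : ∫⁻ y, R.resolventSeries f y ∂m ≤ 3 * ∫⁻ y, f y ∂m := by
  rw [R.lintegral_resolventSeries hf]
  exact add_tsum_inv_two_pow_mul_le le_rfl fun n => hm _ Nat.one_div_pos_of_nat f hf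

lemma pot_resolventSeries_le {f : E → ℝ≥0∞} (hf : Measurable f) (x : E) :
    R.pot (R.resolventSeries f) x ≤ 3 * R.pot f x := by
  refine iSup₂_le fun γ hγ => (R.lintegral_resolventSeries hf (R.kernel γ x)).trans_le ?_
  refine add_tsum_inv_two_pow_mul_le (R.op_le_pot hγ f x) fun n => ?_
  exact (mul_le_mul_right (R.op_le_pot hγ _ x) _).trans
    (R.mul_pot_op_le Nat.one_div_pos_of_nat hf x)

lemma pot_eq_zero_of_resolventSeries_eq_zero {f : E → ℝ≥0∞} (hf : Measurable f) {x : E}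
    (hx : R.resolventSeries f x = 0) : R.pot f x = 0 := by
  rw [R.pot_eq_iSup_nat hf, ENNReal.iSup_eq_zero]
  intro n
  simpa [Nat.cast_add_one_pos] using ENNReal.tsum_eq_zero.1 (add_eq_zero.1 hx).2 n

lemma transient_of_ae_pot_pos_of_ae_pot_lt_top {m : Measure E} (hm : R.SubInvariant m)
    {f : E → ℝ≥0∞} (hf : Measurable f) (hfi : ∫⁻ x, f x ∂m < ⊤)
    (hpos : ∀ᵐ x ∂m, 0 < R.pot f x) (hfin : ∀ᵐ x ∂m, R.pot f x < ⊤) : R.Transient m := by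
  refine ⟨R.resolventSeries f, R.measurable_resolventSeries hf,
    (R.lintegral_resolventSeries_le hm hf).trans_lt (ENNReal.mul_lt_top (by norm_num) hfi), ?_, ?_⟩
  · filter_upwards [hpos] with x hx
    exact pos_iff_ne_zero.2 fun h => hx.ne' (R.pot_eq_zero_of_resolventSeries_eq_zero hf h)
  · filter_upwards [hfin] with x hx
    exact (R.pot_resolventSeries_le hf x).trans_lt (ENNReal.mul_lt_top (by norm_num) hx)

end SubMarkovResolvent

theorem transient_or_recurrent_of_irreducible_general {E : Type*} [MeasurableSpace E]
    (R : SubMarkovResolvent E) (m : MeasureTheory.Measure E)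
    (hm : R.SubInvariant m) (hIrr : R.Irreducible m) :
    R.Transient m ∨ R.Recurrent m := by
  refine or_iff_not_imp_left.2 fun hT f hf hfi => ?_
  rcases hIrr _ (R.absorbing_pot_lt_top m hf) with hfin | hfin
  · exact measure_mono_null (fun x hx => hx.2) hfin
  rcases hIrr _ (R.absorbing_pot_eq_zero m hf) with hpos | hzero
  · have hpos' : ∀ᵐ x ∂m, 0 < R.pot f x := by simpa [ae_iff, pos_iff_ne_zero] using hpos
    exact absurd (R.transient_of_ae_pot_pos_of_ae_pot_lt_top hm hf hfi hpos' (mem_ae_iff.2 hfin)) hT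
  · exact measure_mono_null (fun x hx => hx.1.ne') hzero

/-- Dichotomy: an `m`-irreducible resolvent is either `m`-transient or `m`-recurrent. -/
theorem transient_or_recurrent_of_irreducible {E : Type*} [MeasurableSpace E]
    (R : SubMarkovResolvent E) (m : MeasureTheory.Measure E) [MeasureTheory.SigmaFinite m]
    (hm : R.SubInvariant m) (hIrr : R.Irreducible m) :
    R.Transient m ∨ R.Recurrent m :=
  transient_or_recurrent_of_irreducible_general R m hm hIrr
end

section
/- A function u ∈ L^p(E,m) is U-invariant if and only if it is U*-invariant, and if and only if ∫ f u U*_α g dm = ∫ g u U_α f dm for all bounded positive measurable f, g ∈ L^{p'}(E,m) and all α > 0. -/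
open MeasureTheory ENNReal Filter Set

/-!
For `h ∈ L^p(m)` and positive `g ∈ L^{p'}(m)` duality gives `∫ g U_α h dm = ∫ h U*_α g dm`, both
sides being finite because `α U_α` and `α U*_α` contract every `L^r(m)`, `r ≥ 1`: Jensen's
inequality for the sub-probability measures `α U_α(x, ·)` combined with the sub-invariance of `m`,
which passes from `U` to `U*` through duality. With `h = u f`, invariance of `u` turns
`∫ g U_α(u f) dm` into `∫ g u U_α f dm`. Conversely, testing the identity against indicators of sets
of finite measure identifies `U_α(u f)` with `u U_α f` when `f ∈ L^{p'}`, and an exhaustion of `E`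
by such sets together with dominated convergence under each `U_α(x, ·)` removes that restriction.
The identity is symmetric in `(U, U*)`, whence `U`-invariance is equivalent to `U*`-invariance.
-/

namespace MeasureTheory

variable {X : Type*} [MeasurableSpace X] {μ : Measure X}

lemma ae_lt_top_of_eLpNorm_lt_top {p : ℝ≥0∞} (hp : p ≠ 0) {F : X → ℝ≥0∞}
    (hF : AEMeasurable F μ) (hFp : eLpNorm F p μ < ∞) : ∀ᵐ x ∂μ, F x < ∞ := by
  by_cases hp_top : p = ∞
  · subst hp_top
    filter_upwards [ae_le_eLpNormEssSup (f := F)] with x hx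
    exact hx.trans_lt (by simpa using hFp)
  have hr : 0 < p.toReal := ENNReal.toReal_pos hp hp_top
  have := lintegral_rpow_enorm_lt_top_of_eLpNorm_lt_top hp hp_top hFp
  filter_upwards [ae_lt_top' (hF.pow_const p.toReal) this.ne] with x hx
  exact (ENNReal.rpow_lt_top_iff_of_pos hr).mp (by simpa using hx)

lemma memLp_top_of_nonneg_of_le {f : X → ℝ} (hf : Measurable f) (hf0 : ∀ x, 0 ≤ f x) {C : ℝ}
    (hfC : ∀ x, f x ≤ C) : MemLp f ∞ μ :=
  memLp_top_of_bound hf.aestronglyMeasurable C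
    (.of_forall fun x => (Real.norm_of_nonneg (hf0 x)).trans_le (hfC x))

lemma MemLp.integrableOn_of_lt_top {f : X → ℝ} {p : ℝ≥0∞} (hf : MemLp f p μ) (hp : 1 ≤ p)
    {s : Set X} (hs : μ s < ∞) : IntegrableOn f s μ :=
  have := isFiniteMeasure_restrict.mpr hs.ne
  (hf.restrict s).integrable hp

lemma setIntegral_eq_integral_indicator_one_mul {s : Set X} (hs : MeasurableSet s) (F : X → ℝ) :
    ∫ x in s, F x ∂μ = ∫ x, s.indicator (fun _ => (1 : ℝ)) x * F x ∂μ := by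
  rw [← integral_indicator hs]
  congr 1 with x
  by_cases hx : x ∈ s <;> simp [hx]

end MeasureTheory

namespace SubMarkovResolvent

variable {E : Type*} [MeasurableSpace E] (R : SubMarkovResolvent E) {m : Measure E} {α : ℝ}

lemma kernel_univ_le (hα : 0 < α) (x : E) : R.kernel α x univ ≤ (ENNReal.ofReal α)⁻¹ := by
  rw [ENNReal.le_inv_iff_mul_le, mul_comm]
  exact R.subMarkov α hα x

lemma isFiniteMeasure_kernel (hα : 0 < α) (x : E) : IsFiniteMeasure (R.kernel α x) :=
  ⟨(R.kernel_univ_le hα x).trans_lt (by simpa using hα)⟩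

noncomputable def toKernel (hα : 0 < α) : ProbabilityTheory.Kernel E E where
  toFun := R.kernel α
  measurable' := Measure.measurable_of_measurable_coe _ fun s hs => by
    simpa [lintegral_indicator_one hs] using R.measurable_op α hα (s.indicator 1)
      (measurable_one.indicator hs)

lemma stronglyMeasurable_opR (hα : 0 < α) {h : E → ℝ} (hh : StronglyMeasurable h) :
    StronglyMeasurable (R.opR α h) :=
  hh.integral_kernel (κ := R.toKernel hα)

lemma ae_ae_kernel_of_ae (hm : R.SubInvariant m) (hα : 0 < α) {P : E → Prop}
    (h : ∀ᵐ y ∂m, P y) : ∀ᵐ x ∂m, ∀ᵐ y ∂(R.kernel α x), P y := by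
  obtain ⟨N, hPN, hN, hN0⟩ := exists_measurable_superset_of_null h
  have hop : ∫⁻ x, R.op α (N.indicator 1) x ∂m = 0 := by
    have := hm α hα _ (measurable_one.indicator hN)
    rw [lintegral_indicator_one hN, hN0, nonpos_iff_eq_zero, mul_eq_zero] at this
    exact this.resolve_left (by simpa using hα)
  filter_upwards [(lintegral_eq_zero_iff (R.measurable_op α hα _
    (measurable_one.indicator hN))).mp hop] with x hx
  exact measure_mono_null hPN (by simpa [op, lintegral_indicator_one hN] using hx)

lemma opR_congr_ae (hm : R.SubInvariant m) (hα : 0 < α) {h h' : E → ℝ} (hh : h =ᵐ[m] h') :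
    R.opR α h =ᵐ[m] R.opR α h' := by
  filter_upwards [R.ae_ae_kernel_of_ae hm hα hh] with x hx
  exact integral_congr_ae hx

lemma lintegral_op_le (hm : R.SubInvariant m) (hα : 0 < α) {F : E → ℝ≥0∞} (hF : Measurable F) :
    ∫⁻ x, R.op α F x ∂m ≤ (ENNReal.ofReal α)⁻¹ * ∫⁻ x, F x ∂m := by
  rw [← ENNReal.div_eq_inv_mul, ENNReal.le_div_iff_mul_le (.inl (by simpa using hα))
    (.inl ENNReal.ofReal_ne_top), mul_comm]
  exact hm α hα F hF

/-- Jensen's inequality for the sub-probability measure `α U_α(x, ·)`. -/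
lemma op_rpow_le (hα : 0 < α) {r : ℝ} (hr : 1 ≤ r) {F : E → ℝ≥0∞} (hF : Measurable F)
    (x : E) : R.op α F x ^ r ≤ (ENNReal.ofReal α)⁻¹ ^ (r - 1) * R.op α (fun y => F y ^ r) x := by
  have hr0 : r ≠ 0 := by positivity
  have hHolder := lintegral_mul_norm_pow_le (μ := R.kernel α x) (hF.pow_const r).aemeasurable
    aemeasurable_const (p := r⁻¹) (q := 1 - r⁻¹) (by positivity)
    (sub_nonneg.mpr (inv_le_one_of_one_le₀ hr)) (add_sub_cancel _ _) (g := 1)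
  simp only [ENNReal.rpow_rpow_inv hr0, Pi.one_apply, ENNReal.one_rpow, mul_one,
    lintegral_one] at hHolder
  calc R.op α F x ^ r
      ≤ ((R.op α (fun y => F y ^ r) x) ^ r⁻¹ * R.kernel α x univ ^ (1 - r⁻¹)) ^ r :=
        ENNReal.rpow_le_rpow hHolder (by positivity)
    _ = R.kernel α x univ ^ (r - 1) * R.op α (fun y => F y ^ r) x := by
        rw [ENNReal.mul_rpow_of_nonneg _ _ (by positivity), ENNReal.rpow_inv_rpow hr0,
          ← ENNReal.rpow_mul, sub_mul, inv_mul_cancel₀ hr0, one_mul, mul_comm]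
    _ ≤ _ := by gcongr; exact R.kernel_univ_le hα x

lemma lintegral_op_rpow_le (hm : R.SubInvariant m) (hα : 0 < α) {r : ℝ} (hr : 1 ≤ r)
    {F : E → ℝ≥0∞} (hF : Measurable F) :
    ∫⁻ x, R.op α F x ^ r ∂m ≤ (ENNReal.ofReal α)⁻¹ ^ r * ∫⁻ x, F x ^ r ∂m := by
  have hFr : Measurable fun y => F y ^ r := hF.pow_const r
  calc ∫⁻ x, R.op α F x ^ r ∂m
      ≤ ∫⁻ x, (ENNReal.ofReal α)⁻¹ ^ (r - 1) * R.op α (fun y => F y ^ r) x ∂m :=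
        lintegral_mono fun x => R.op_rpow_le hα hr hF x
    _ = (ENNReal.ofReal α)⁻¹ ^ (r - 1) * ∫⁻ x, R.op α (fun y => F y ^ r) x ∂m :=
        lintegral_const_mul _ (R.measurable_op α hα _ hFr)
    _ ≤ (ENNReal.ofReal α)⁻¹ ^ (r - 1) * ((ENNReal.ofReal α)⁻¹ * ∫⁻ x, F x ^ r ∂m) := by
        gcongr; exact R.lintegral_op_le hm hα hFr
    _ = _ := by
        rw [← mul_assoc]
        congr 1
        conv_rhs => rw [← sub_add_cancel r 1]
        rw [ENNReal.rpow_add _ _ (by simp) (by simpa using hα), ENNReal.rpow_one]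

lemma op_ae_le_eLpNormEssSup (hm : R.SubInvariant m) (hα : 0 < α) (F : E → ℝ≥0∞) :
    ∀ᵐ x ∂m, R.op α F x ≤ (ENNReal.ofReal α)⁻¹ * eLpNormEssSup F m := by
  filter_upwards [R.ae_ae_kernel_of_ae hm hα (ae_le_eLpNormEssSup (f := F))] with x hx
  calc R.op α F x ≤ ∫⁻ _, eLpNormEssSup F m ∂(R.kernel α x) := lintegral_mono_ae hx
    _ = eLpNormEssSup F m * R.kernel α x univ := lintegral_const _
    _ ≤ _ := by rw [mul_comm]; gcongr; exact R.kernel_univ_le hα x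

theorem eLpNorm_op_le (hm : R.SubInvariant m) (hα : 0 < α) {p : ℝ≥0∞} (hp : 1 ≤ p)
    {F : E → ℝ≥0∞} (hF : Measurable F) :
    eLpNorm (R.op α F) p m ≤ (ENNReal.ofReal α)⁻¹ * eLpNorm F p m := by
  by_cases hp_top : p = ∞
  · subst hp_top
    simp only [eLpNorm_exponent_top]
    exact eLpNormEssSup_le_of_ae_enorm_bound (R.op_ae_le_eLpNormEssSup hm hα F)
  have hp0 : p ≠ 0 := (zero_lt_one.trans_le hp).ne'
  have hr : 1 ≤ p.toReal := by
    simpa using ENNReal.toReal_mono hp_top hp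
  simp only [eLpNorm_eq_lintegral_rpow_enorm_toReal hp0 hp_top, enorm_eq_self]
  calc (∫⁻ x, R.op α F x ^ p.toReal ∂m) ^ (1 / p.toReal)
      ≤ ((ENNReal.ofReal α)⁻¹ ^ p.toReal * ∫⁻ x, F x ^ p.toReal ∂m) ^ (1 / p.toReal) := by
        gcongr; exact R.lintegral_op_rpow_le hm hα hr hF
    _ = _ := by
        rw [ENNReal.mul_rpow_of_nonneg _ _ (by positivity), one_div,
          ENNReal.rpow_rpow_inv (by positivity)]

lemma eLpNorm_opR_le (hm : R.SubInvariant m) (hα : 0 < α) {p : ℝ≥0∞} (hp : 1 ≤ p)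
    {h : E → ℝ} (hh : Measurable h) :
    eLpNorm (R.opR α h) p m ≤ (ENNReal.ofReal α)⁻¹ * eLpNorm h p m :=
  calc eLpNorm (R.opR α h) p m ≤ eLpNorm (R.op α fun y => ‖h y‖ₑ) p m :=
        eLpNorm_mono_enorm fun _ => enorm_integral_le_lintegral_enorm _
    _ ≤ _ := by simpa only [eLpNorm_enorm] using R.eLpNorm_op_le hm hα hp hh.enorm

lemma memLp_opR (hm : R.SubInvariant m) (hα : 0 < α) {p : ℝ≥0∞} (hp : 1 ≤ p)
    {h : E → ℝ} (hh : Measurable h) (hhp : MemLp h p m) : MemLp (R.opR α h) p m :=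
  ⟨(R.stronglyMeasurable_opR hα hh.stronglyMeasurable).aestronglyMeasurable,
    (R.eLpNorm_opR_le hm hα hp hh).trans_lt (ENNReal.mul_lt_top (by simpa using hα) hhp.2)⟩

lemma ae_op_lt_top (hm : R.SubInvariant m) (hα : 0 < α) {p : ℝ≥0∞} (hp : 1 ≤ p)
    {F : E → ℝ≥0∞} (hF : Measurable F) (hFp : eLpNorm F p m < ∞) :
    ∀ᵐ x ∂m, R.op α F x < ∞ :=
  ae_lt_top_of_eLpNorm_lt_top (zero_lt_one.trans_le hp).ne' (R.measurable_op α hα F hF).aemeasurable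
    ((R.eLpNorm_op_le hm hα hp hF).trans_lt (ENNReal.mul_lt_top (by simpa using hα) hFp))

lemma ae_op_ofReal_lt_top (hm : R.SubInvariant m) (hα : 0 < α) {p : ℝ≥0∞} (hp : 1 ≤ p)
    {h : E → ℝ} (hh : Measurable h) (hh0 : ∀ x, 0 ≤ h x) (hhp : MemLp h p m) :
    ∀ᵐ x ∂m, R.op α (fun y => ENNReal.ofReal (h y)) x < ∞ :=
  R.ae_op_lt_top hm hα hp hh.ennreal_ofReal
    (by rw [← Function.comp_def, eLpNorm_ofReal _ (.of_forall hh0)]; exact hhp.2)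

lemma ae_integrable_kernel (hm : R.SubInvariant m) (hα : 0 < α) {p : ℝ≥0∞} (hp : 1 ≤ p)
    {h : E → ℝ} (hh : Measurable h) (hhp : MemLp h p m) :
    ∀ᵐ x ∂m, Integrable h (R.kernel α x) := by
  filter_upwards [R.ae_op_lt_top hm hα hp hh.enorm (by simpa only [eLpNorm_enorm] using hhp.2)]
    with x hx
  exact ⟨hh.aestronglyMeasurable, hx⟩

lemma integral_mul_opR_of_nonneg (hα : 0 < α) {g h : E → ℝ} (hg : Measurable g)
    (hg0 : ∀ x, 0 ≤ g x) (hh : Measurable h) (hh0 : ∀ x, 0 ≤ h x)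
    (hfin : ∀ᵐ x ∂m, R.op α (fun y => ENNReal.ofReal (h y)) x < ∞) :
    ∫ x, g x * R.opR α h x ∂m
      = (∫⁻ x, ENNReal.ofReal (g x) * R.op α (fun y => ENNReal.ofReal (h y)) x ∂m).toReal := by
  have hopR : ∀ x, g x * R.opR α h x
      = (ENNReal.ofReal (g x) * R.op α (fun y => ENNReal.ofReal (h y)) x).toReal := fun x => by
    rw [ENNReal.toReal_mul, ENNReal.toReal_ofReal (hg0 x), opR,
      integral_eq_lintegral_of_nonneg_ae (.of_forall hh0) hh.aestronglyMeasurable, op]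
  simp only [hopR]
  refine integral_toReal (hg.ennreal_ofReal.mul
    (R.measurable_op α hα _ hh.ennreal_ofReal)).aemeasurable ?_
  filter_upwards [hfin] with x hx
  exact ENNReal.mul_lt_top ENNReal.ofReal_lt_top hx

variable {R} in
lemma InDuality.symm {S : SubMarkovResolvent E} (hD : R.InDuality S m) : S.InDuality R m :=
  fun α hα f g hf hg => (hD α hα g f hg hf).symm

variable {R} in
lemma InDuality.subInvariant {S : SubMarkovResolvent E} (hD : R.InDuality S m) :
    S.SubInvariant m := by
  intro α hα f hf
  have hS : ∫⁻ x, S.op α f x ∂m = ∫⁻ x, f x * R.kernel α x univ ∂m := by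
    simpa [op] using (hD α hα f 1 hf measurable_one).symm
  rw [hS, ← lintegral_const_mul' _ _ ENNReal.ofReal_ne_top]
  refine lintegral_mono fun x => ?_
  calc ENNReal.ofReal α * (f x * R.kernel α x univ)
      = f x * (ENNReal.ofReal α * R.kernel α x univ) := by ring
    _ ≤ f x := mul_le_of_le_one_right' (R.subMarkov α hα x)

variable {S : SubMarkovResolvent E} {p q : ℝ≥0∞} [p.HolderConjugate q]

lemma integral_mul_opR_eq_of_nonneg (hm : R.SubInvariant m) (hD : R.InDuality S m)
    (hα : 0 < α) {g h : E → ℝ} (hg : Measurable g) (hg0 : ∀ x, 0 ≤ g x) (hgq : MemLp g q m)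
    (hh : Measurable h) (hh0 : ∀ x, 0 ≤ h x) (hhp : MemLp h p m) :
    ∫ x, g x * R.opR α h x ∂m = ∫ x, h x * S.opR α g x ∂m := by
  rw [R.integral_mul_opR_of_nonneg hα hg hg0 hh hh0
      (R.ae_op_ofReal_lt_top hm hα (HolderConjugate.one_le p q) hh hh0 hhp),
    S.integral_mul_opR_of_nonneg hα hh hh0 hg hg0
      (S.ae_op_ofReal_lt_top hD.subInvariant hα (HolderConjugate.one_le q p) hg hg0 hgq),
    hD α hα _ _ hg.ennreal_ofReal hh.ennreal_ofReal]

lemma opR_ae_eq_sub (hm : R.SubInvariant m) (hα : 0 < α) {r : ℝ≥0∞} (hr : 1 ≤ r) {h : E → ℝ}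
    (hh : Measurable h) (hhr : MemLp h r m) :
    R.opR α h =ᵐ[m]
      fun x => R.opR α (fun y => max (h y) 0) x - R.opR α (fun y => max (-h y) 0) x := by
  filter_upwards [R.ae_integrable_kernel hm hα hr hh hhr] with x hx
  simp only [opR, ← integral_sub hx.pos_part hx.neg_part, max_zero_sub_max_neg_zero_eq_self]

theorem integral_mul_opR_eq (hm : R.SubInvariant m) (hD : R.InDuality S m)
    (hα : 0 < α) {g h : E → ℝ} (hg : Measurable g) (hg0 : ∀ x, 0 ≤ g x) (hgq : MemLp g q m)
    (hh : Measurable h) (hhp : MemLp h p m) :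
    ∫ x, g x * R.opR α h x ∂m = ∫ x, h x * S.opR α g x ∂m := by
  have hp : 1 ≤ p := HolderConjugate.one_le p q
  have hpos : Measurable fun y => max (h y) 0 := hh.max measurable_const
  have hneg : Measurable fun y => max (-h y) 0 := hh.neg.max measurable_const
  have hSg := S.memLp_opR hD.subInvariant hα (HolderConjugate.one_le q p) hg hgq
  have hgpos : Integrable (fun x => g x * R.opR α (fun y => max (h y) 0) x) m :=
    hgq.integrable_mul (R.memLp_opR hm hα hp hpos hhp.pos_part)
  have hgneg : Integrable (fun x => g x * R.opR α (fun y => max (-h y) 0) x) m :=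
    hgq.integrable_mul (R.memLp_opR hm hα hp hneg hhp.neg_part)
  have hposS : Integrable (fun x => max (h x) 0 * S.opR α g x) m :=
    hhp.pos_part.integrable_mul hSg
  have hnegS : Integrable (fun x => max (-h x) 0 * S.opR α g x) m :=
    hhp.neg_part.integrable_mul hSg
  calc ∫ x, g x * R.opR α h x ∂m
      = ∫ x, g x * R.opR α (fun y => max (h y) 0) x ∂m
          - ∫ x, g x * R.opR α (fun y => max (-h y) 0) x ∂m := by
        rw [← integral_sub hgpos hgneg]
        refine integral_congr_ae ?_
        filter_upwards [R.opR_ae_eq_sub hm hα hp hh hhp] with x hx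
        rw [hx, mul_sub]
    _ = ∫ x, max (h x) 0 * S.opR α g x ∂m - ∫ x, max (-h x) 0 * S.opR α g x ∂m := by
        rw [R.integral_mul_opR_eq_of_nonneg hm hD hα hg hg0 hgq hpos (fun _ => le_max_right _ _)
            hhp.pos_part,
          R.integral_mul_opR_eq_of_nonneg hm hD hα hg hg0 hgq hneg (fun _ => le_max_right _ _)
            hhp.neg_part]
    _ = ∫ x, h x * S.opR α g x ∂m := by
        rw [← integral_sub hposS hnegS]
        simp only [← sub_mul, max_zero_sub_max_neg_zero_eq_self]

/-- The measure `u m` puts `U` and `U*` in duality on bounded positive test functions in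
`L^q(m)`. -/
def InWeightedDuality (R S : SubMarkovResolvent E) (m : Measure E) (q : ℝ≥0∞) (u : E → ℝ) :
    Prop :=
  ∀ α : ℝ, 0 < α → ∀ f g : E → ℝ, Measurable f → Measurable g →
    (∀ x, 0 ≤ f x) → (∀ x, 0 ≤ g x) → (∃ C : ℝ, ∀ x, f x ≤ C) → (∃ C : ℝ, ∀ x, g x ≤ C) →
    MemLp f q m → MemLp g q m →
    ∫ x, f x * u x * S.opR α g x ∂m = ∫ x, g x * u x * R.opR α f x ∂m

variable {R} {u v : E → ℝ}

lemma InWeightedDuality.symm (h : R.InWeightedDuality S m q u) : S.InWeightedDuality R m q u :=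
  fun α hα f g hf hg hf0 hg0 hfC hgC hfq hgq => (h α hα g f hg hf hg0 hf0 hgC hfC hgq hfq).symm

lemma InWeightedDuality.congr_ae (h : R.InWeightedDuality S m q u) (huv : u =ᵐ[m] v) :
    R.InWeightedDuality S m q v := by
  intro α hα f g hf hg hf0 hg0 hfC hgC hfq hgq
  convert h α hα f g hf hg hf0 hg0 hfC hgC hfq hgq using 1 <;>
    exact integral_congr_ae (huv.mono fun x hx => by simp only [hx])

lemma Invariant.congr_ae (hm : R.SubInvariant m) (hu : R.Invariant m u) (huv : u =ᵐ[m] v) :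
    R.Invariant m v := by
  intro α hα f hf hf0 hfC
  have hvf : (fun y => u y * f y) =ᵐ[m] fun y => v y * f y := huv.mono fun y hy => by simp only [hy]
  filter_upwards [hu α hα f hf hf0 hfC, R.opR_congr_ae hm hα hvf, huv] with x hx hxv hxu
  rw [← hxv, hx, hxu]

lemma Invariant.inWeightedDuality (hm : R.SubInvariant m) (hD : R.InDuality S m)
    (hu : Measurable u) (hup : MemLp u p m) (hinv : R.Invariant m u) :
    R.InWeightedDuality S m q u := by
  rintro α hα f g hf hg hf0 hg0 ⟨C, hfC⟩ - - hgq
  have huf : MemLp (fun y => u y * f y) p m := (memLp_top_of_nonneg_of_le hf hf0 hfC).mul' hup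
  calc ∫ x, f x * u x * S.opR α g x ∂m
      = ∫ x, u x * f x * S.opR α g x ∂m := by simp only [mul_comm (f _)]
    _ = ∫ x, g x * R.opR α (fun y => u y * f y) x ∂m :=
        (R.integral_mul_opR_eq hm hD hα hg hg0 hgq (hu.mul hf) huf).symm
    _ = ∫ x, g x * u x * R.opR α f x ∂m :=
        integral_congr_ae <|
          (hinv α hα f hf hf0 ⟨C, hfC⟩).mono fun x hx => by simp only [hx, mul_assoc]

lemma opR_mul_ae_eq_of_inWeightedDuality [SigmaFinite m] (hm : R.SubInvariant m)
    (hD : R.InDuality S m) (hu : Measurable u) (hup : MemLp u p m)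
    (h : R.InWeightedDuality S m q u) (hα : 0 < α) {f : E → ℝ} (hf : Measurable f)
    (hf0 : ∀ x, 0 ≤ f x) {C : ℝ} (hfC : ∀ x, f x ≤ C) (hfq : MemLp f q m) :
    R.opR α (fun y => u y * f y) =ᵐ[m] fun x => u x * R.opR α f x := by
  have hp : 1 ≤ p := HolderConjugate.one_le p q
  have hf_top := memLp_top_of_nonneg_of_le (μ := m) hf hf0 hfC
  have huf : MemLp (fun y => u y * f y) p m := hf_top.mul' hup
  have hRuf := R.memLp_opR hm hα hp (hu.mul hf) huf
  have huRf : MemLp (fun x => u x * R.opR α f x) p m :=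
    (R.memLp_opR hm hα le_top hf hf_top).mul' hup
  refine ae_eq_of_forall_setIntegral_eq_of_sigmaFinite
    (fun s _ hs => hRuf.integrableOn_of_lt_top hp hs)
    (fun s _ hs => huRf.integrableOn_of_lt_top hp hs) fun s hs hms => ?_
  have h1s_meas : Measurable (s.indicator fun _ => (1 : ℝ)) := measurable_const.indicator hs
  have h1s0 : ∀ x, 0 ≤ s.indicator (fun _ => (1 : ℝ)) x :=
    indicator_nonneg fun _ _ => zero_le_one
  have h1s1 : ∀ x, s.indicator (fun _ => (1 : ℝ)) x ≤ 1 :=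
    indicator_le_self' fun _ _ => zero_le_one
  have h1sq : MemLp (s.indicator fun _ => (1 : ℝ)) q m :=
    memLp_indicator_const q hs 1 (.inr hms.ne)
  calc ∫ x in s, R.opR α (fun y => u y * f y) x ∂m
      = ∫ x, s.indicator (fun _ => 1) x * R.opR α (fun y => u y * f y) x ∂m :=
        setIntegral_eq_integral_indicator_one_mul hs _
    _ = ∫ x, u x * f x * S.opR α (s.indicator fun _ => 1) x ∂m :=
        R.integral_mul_opR_eq hm hD hα h1s_meas h1s0 h1sq (hu.mul hf) huf
    _ = ∫ x, f x * u x * S.opR α (s.indicator fun _ => 1) x ∂m := by simp only [mul_comm (u _)]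
    _ = ∫ x, s.indicator (fun _ => 1) x * u x * R.opR α f x ∂m :=
        h α hα f _ hf h1s_meas hf0 h1s0 ⟨C, hfC⟩ ⟨1, h1s1⟩ hfq h1sq
    _ = ∫ x in s, u x * R.opR α f x ∂m := by
        simp only [mul_assoc, ← setIntegral_eq_integral_indicator_one_mul hs]

lemma tendsto_opR_indicator {s : ℕ → Set E} (hs : ∀ n, MeasurableSet (s n)) (hmono : Monotone s)
    (hcover : ⋃ n, s n = univ) {h : E → ℝ} {x : E} (hint : Integrable h (R.kernel α x)) :
    Tendsto (fun n => R.opR α ((s n).indicator h) x) atTop (nhds (R.opR α h x)) := by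
  simp only [opR, integral_indicator (hs _)]
  simpa [hcover] using tendsto_setIntegral_of_monotone hs hmono hint.integrableOn

theorem InWeightedDuality.invariant [SigmaFinite m] (hm : R.SubInvariant m)
    (hD : R.InDuality S m) (hu : Measurable u) (hup : MemLp u p m)
    (h : R.InWeightedDuality S m q u) : R.Invariant m u := by
  rintro α hα f hf hf0 ⟨C, hfC⟩
  set fn : ℕ → E → ℝ := fun n => (spanningSets m n).indicator f
  have hfn0 : ∀ n x, 0 ≤ fn n x := fun n => indicator_nonneg fun x _ => hf0 x
  have hfnC : ∀ n x, fn n x ≤ C := fun n x =>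
    (indicator_le_self' (fun x _ => hf0 x) x).trans (hfC x)
  have hfn : ∀ n, Measurable (fn n) := fun n => hf.indicator (measurableSet_spanningSets m n)
  have hfnq : ∀ n, MemLp (fn n) q m := fun n =>
    (memLp_top_of_nonneg_of_le (hfn n) (hfn0 n) (hfnC n)).mono_exponent_of_measure_support_ne_top
      (fun x hx => indicator_of_notMem hx f) (measure_spanningSets_lt_top m n).ne le_top
  have hbound : ∀ y, ‖f y‖ ≤ C := fun y => (Real.norm_of_nonneg (hf0 y)).trans_le (hfC y)
  filter_upwards [ae_all_iff.mpr fun n => opR_mul_ae_eq_of_inWeightedDuality hm hD hu hup h hα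
      (hfn n) (hfn0 n) (hfnC n) (hfnq n),
    R.ae_integrable_kernel hm hα (HolderConjugate.one_le p q) hu hup] with x hx hux
  have := R.isFiniteMeasure_kernel hα x
  have hlim_uf : Tendsto (fun n => R.opR α (fun y => u y * fn n y) x) atTop
      (nhds (R.opR α (fun y => u y * f y) x)) := by
    simp only [fn, ← indicator_mul_right]
    exact R.tendsto_opR_indicator (measurableSet_spanningSets m) (monotone_spanningSets m)
      (iUnion_spanningSets m) (hux.mul_bdd hf.aestronglyMeasurable (.of_forall hbound))
  have hlim_f : Tendsto (fun n => R.opR α (fn n) x) atTop (nhds (R.opR α f x)) :=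
    R.tendsto_opR_indicator (measurableSet_spanningSets m) (monotone_spanningSets m)
      (iUnion_spanningSets m) (.of_bound hf.aestronglyMeasurable C (.of_forall hbound))
  exact tendsto_nhds_unique (hlim_uf.congr hx) (hlim_f.const_mul (u x))

theorem invariant_iff_inWeightedDuality [SigmaFinite m] (hm : R.SubInvariant m)
    (hD : R.InDuality S m) (hup : MemLp u p m) :
    R.Invariant m u ↔ R.InWeightedDuality S m q u := by
  have huw : u =ᵐ[m] hup.1.mk u := hup.1.ae_eq_mk
  have hw : Measurable (hup.1.mk u) := hup.1.stronglyMeasurable_mk.measurable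
  have hwp : MemLp (hup.1.mk u) p m := hup.ae_eq huw
  exact ⟨fun h => ((h.congr_ae hm huw).inWeightedDuality hm hD hw hwp).congr_ae huw.symm,
    fun h => ((h.congr_ae huw).invariant hm hD hw hwp).congr_ae hm huw.symm⟩

end SubMarkovResolvent

theorem invariant_iff_dual_invariant_general {E : Type*} [MeasurableSpace E]
    (R S : SubMarkovResolvent E) (m : MeasureTheory.Measure E) [MeasureTheory.SigmaFinite m]
    (hm : R.SubInvariant m) (hD : R.InDuality S m)
    (p p' : ℝ≥0∞) (hpp' : p⁻¹ + p'⁻¹ = 1)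
    (u : E → ℝ) (hu : MeasureTheory.MemLp u p m) :
    (R.Invariant m u ↔ S.Invariant m u) ∧
    (R.Invariant m u ↔
      ∀ α : ℝ, 0 < α → ∀ f g : E → ℝ, Measurable f → Measurable g →
        (∀ x, 0 ≤ f x) → (∀ x, 0 ≤ g x) → (∃ C : ℝ, ∀ x, f x ≤ C) → (∃ C : ℝ, ∀ x, g x ≤ C) →
        MeasureTheory.MemLp f p' m → MeasureTheory.MemLp g p' m →
        ∫ x, f x * u x * S.opR α g x ∂m = ∫ x, g x * u x * R.opR α f x ∂m) := by
  have : p.HolderConjugate p' := ENNReal.holderConjugate_iff.mpr hpp'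
  have hR := R.invariant_iff_inWeightedDuality (q := p') hm hD hu
  have hS := S.invariant_iff_inWeightedDuality (q := p') hD.subInvariant hD.symm hu
  exact ⟨hR.trans ((Iff.intro .symm .symm).trans hS.symm), hR⟩

/-- `u ∈ L^p(E,m)` is `U`-invariant iff it is `U*`-invariant, and iff
`∫ f u U*_α g dm = ∫ g u U_α f dm` for all bounded positive measurable `f, g ∈ L^{p'}(E,m)`
and all `α > 0`. -/
theorem invariant_iff_dual_invariant {E : Type*} [MeasurableSpace E]
    (R S : SubMarkovResolvent E) (m : MeasureTheory.Measure E) [MeasureTheory.SigmaFinite m]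
    (hm : R.SubInvariant m) (hD : R.InDuality S m)
    (p p' : ℝ≥0∞) (hp : 1 ≤ p) (hpp' : p⁻¹ + p'⁻¹ = 1)
    (u : E → ℝ) (hu : MeasureTheory.MemLp u p m) :
    (R.Invariant m u ↔ S.Invariant m u) ∧
    (R.Invariant m u ↔
      ∀ α : ℝ, 0 < α → ∀ f g : E → ℝ, Measurable f → Measurable g →
        (∀ x, 0 ≤ f x) → (∀ x, 0 ≤ g x) → (∃ C : ℝ, ∀ x, f x ≤ C) → (∃ C : ℝ, ∀ x, g x ≤ C) →
        MeasureTheory.MemLp f p' m → MeasureTheory.MemLp g p' m →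
        ∫ x, f x * u x * S.opR α g x ∂m = ∫ x, g x * u x * R.opR α f x ∂m) :=
  invariant_iff_dual_invariant_general R S m hm hD p p' hpp' u hu
end
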